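/- Let k ≥ 2 be an integer and let x₀, x₁, x₂ be i.i.d. random variables uniformly distributed on {1, 2, ..., k}. Let M := E(|x₁ - x₀|). Then Cov(|x₁ - x₀|, |x₂ - x₁|) = E((|x₁ - x₀| - M)(|x₂ - x₁| - M)) = (k - 1)(k - 2)(k + 2)(k + 1)/(180k²). -/

import Mathlib

open MeasureTheory ProbabilityTheory
open scoped ENNReal

/-- The uniform probability measure on the integers `{1, ..., k}` (as a measure on `ℕ`). -/
noncomputable def unifMeasure (k : ℕ) : Measure ℕ :=
  (k : ℝ≥0∞)⁻¹ • ∑ i ∈ Finset.Icc 1 k, Measure.dirac i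

/-!
The law of `(x₀, x₁, x₂)` is uniform on `{1, …, k}³`, so both expectations are finite averages.
Fixing the middle letter `x₁ = b`, the two factors of the covariance decouple: summed over `x₀`
and over `x₂` separately, each gives `D b - k M` with `D b = ∑ₐ |b - a| = b² - (k+1) b + k(k+1)/2`.
Hence the covariance is `k⁻³ ∑_b (D b - k M)²`, a polynomial sum, and `M = (k² - 1) / (3k)`.
-/

open Finset

namespace MeasureTheory

variable {α β : Type*} [MeasurableSpace α] [MeasurableSpace β]

theorem Measure.smul_sum_dirac_prod (c d : ℝ≥0∞) (s : Finset α) (t : Finset β) :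
    (c • ∑ a ∈ s, dirac a).prod (d • ∑ b ∈ t, dirac b) = (c * d) • ∑ p ∈ s ×ˢ t, dirac p := by
  rw [Measure.prod_smul_left, Measure.prod_smul_right, smul_smul]
  congr 1
  ext S hS
  rw [Measure.prod_apply hS, lintegral_finsetSum_measure, Measure.finsetSum_apply, sum_product]
  refine Finset.sum_congr rfl fun a _ => ?_
  rw [lintegral_dirac' _ (measurable_measure_prodMk_left hS), Measure.finsetSum_apply]
  simp only [Measure.dirac_apply' _ hS, Measure.dirac_apply' _ (measurable_prodMk_left hS)]
  rfl

theorem integral_smul_sum_dirac [MeasurableSingletonClass α] {E : Type*} [NormedAddCommGroup E]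
    [NormedSpace ℝ E] [CompleteSpace E] (c : ℝ≥0∞) (s : Finset α) (f : α → E) :
    ∫ x, f x ∂(c • ∑ a ∈ s, Measure.dirac a) = c.toReal • ∑ a ∈ s, f a := by
  rw [integral_smul_measure, integral_finsetSum_measure fun a _ => integrable_dirac (by simp)]
  simp only [integral_dirac]

end MeasureTheory

theorem ProbabilityTheory.iIndepFun.map_fin_three_eq_prod {Ω β : Type*} [MeasurableSpace Ω]
    [MeasurableSpace β] {μ : Measure Ω} [IsProbabilityMeasure μ] {x : Fin 3 → Ω → β}
    (hmeas : ∀ i, Measurable (x i)) (hindep : iIndepFun x μ) :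
    μ.map (fun ω => (x 0 ω, x 1 ω, x 2 ω))
      = (μ.map (x 0)).prod ((μ.map (x 1)).prod (μ.map (x 2))) := by
  have h12 : μ.map (fun ω => (x 1 ω, x 2 ω)) = (μ.map (x 1)).prod (μ.map (x 2)) :=
    (indepFun_iff_map_prod_eq_prod_map_map (hmeas 1).aemeasurable (hmeas 2).aemeasurable).1
      (hindep.indepFun (by decide))
  rw [← h12]
  exact (indepFun_iff_map_prod_eq_prod_map_map (hmeas 0).aemeasurable
    ((hmeas 1).prodMk (hmeas 2)).aemeasurable).1
    (hindep.indepFun_prodMk hmeas 1 2 0 (by decide) (by decide)).symm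

theorem integral_comp_eq_sum_of_iid_unif {Ω : Type*} [MeasurableSpace Ω] {μ : Measure Ω}
    [IsProbabilityMeasure μ] {k : ℕ} {x : Fin 3 → Ω → ℕ} (hmeas : ∀ i, Measurable (x i))
    (hdist : ∀ i, μ.map (x i) = unifMeasure k) (hindep : iIndepFun x μ)
    (f : ℕ × ℕ × ℕ → ℝ) :
    ∫ ω, f (x 0 ω, x 1 ω, x 2 ω) ∂μ
      = ((k : ℝ) ^ 3)⁻¹ * ∑ q ∈ Icc 1 k ×ˢ Icc 1 k ×ˢ Icc 1 k, f q := by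
  have hT : Measurable fun ω => (x 0 ω, x 1 ω, x 2 ω) :=
    (hmeas 0).prodMk ((hmeas 1).prodMk (hmeas 2))
  rw [← integral_map hT.aemeasurable Measurable.of_discrete.aestronglyMeasurable,
    hindep.map_fin_three_eq_prod hmeas, hdist, hdist, hdist, unifMeasure,
    Measure.smul_sum_dirac_prod, Measure.smul_sum_dirac_prod, integral_smul_sum_dirac]
  simp [pow_three, mul_assoc]

theorem Finset.sum_product_product_eq_sum_middle {α β γ M : Type*} [AddCommMonoid M]
    (s : Finset α) (t : Finset β) (u : Finset γ) (f : α × β × γ → M) :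
    ∑ q ∈ s ×ˢ t ×ˢ u, f q = ∑ b ∈ t, ∑ a ∈ s, ∑ c ∈ u, f (a, b, c) := by
  simp only [sum_product]
  exact sum_comm

theorem sum_Icc_natCast (n : ℕ) : ∑ i ∈ Icc 1 n, (i : ℝ) = n * (n + 1) / 2 := by
  induction n with
  | zero => simp
  | succ n ih => rw [sum_Icc_succ_top (by omega), ih]; push_cast; ring

theorem sum_Icc_quadratic (n : ℕ) (p q : ℝ) :
    ∑ i ∈ Icc 1 n, ((i : ℝ) ^ 2 - p * i + q)
      = n * (n + 1) * (2 * n + 1) / 6 - p * (n * (n + 1) / 2) + q * n := by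
  induction n with
  | zero => simp
  | succ n ih => rw [sum_Icc_succ_top (by omega), ih]; push_cast; ring

theorem sum_Icc_quadratic_sq (n : ℕ) (p q : ℝ) :
    ∑ i ∈ Icc 1 n, ((i : ℝ) ^ 2 - p * i + q) ^ 2 =
      n * (n + 1) * (2 * n + 1) * (3 * n ^ 2 + 3 * n - 1) / 30 - 2 * p * (n ^ 2 * (n + 1) ^ 2 / 4)
        + (p ^ 2 + 2 * q) * (n * (n + 1) * (2 * n + 1) / 6) - 2 * p * q * (n * (n + 1) / 2)
        + q ^ 2 * n := by
  induction n with
  | zero => simp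
  | succ n ih => rw [sum_Icc_succ_top (by omega), ih]; push_cast; ring

theorem sum_Icc_abs_sub {b k : ℕ} (hb : b ≤ k) :
    ∑ a ∈ Icc 1 k, |(b : ℝ) - a| = b ^ 2 - (k + 1) * b + k * (k + 1) / 2 := by
  induction k, hb using Nat.le_induction with
  | base =>
    have hle : ∀ a ∈ Icc 1 b, |(b : ℝ) - a| = b - a := fun a ha =>
      abs_of_nonneg (sub_nonneg.2 (by exact_mod_cast (mem_Icc.1 ha).2))
    rw [sum_congr rfl hle, sum_sub_distrib, sum_const, Nat.card_Icc, sum_Icc_natCast]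
    simp only [nsmul_eq_mul, Nat.add_sub_cancel]
    ring
  | succ k hbk ih =>
    have hb_le : (b : ℝ) ≤ k := by exact_mod_cast hbk
    rw [sum_Icc_succ_top (by omega), ih, abs_of_nonpos (by push_cast; linarith)]
    push_cast
    ring

theorem sum_Icc_sum_Icc_abs_sub (k : ℕ) :
    ∑ b ∈ Icc 1 k, ∑ a ∈ Icc 1 k, |(b : ℝ) - a| = (k : ℝ) * (k ^ 2 - 1) / 3 := by
  rw [sum_congr rfl fun b hb => sum_Icc_abs_sub (mem_Icc.1 hb).2, sum_Icc_quadratic]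
  ring

theorem sum_Icc_abs_sub_sub_mean {b k : ℕ} (hb : b ≤ k) (hk : (k : ℝ) ≠ 0) :
    ∑ a ∈ Icc 1 k, (|(b : ℝ) - a| - (k ^ 2 - 1) / (3 * k))
      = (b : ℝ) ^ 2 - (k + 1) * b + (k + 1) * (k + 2) / 6 := by
  rw [sum_sub_distrib, sum_Icc_abs_sub hb, sum_const, Nat.card_Icc, nsmul_eq_mul,
    Nat.add_sub_cancel]
  field_simp
  ring

theorem sum_Icc_quadratic_centered_sq (k : ℕ) :
    ∑ b ∈ Icc 1 k, ((b : ℝ) ^ 2 - (k + 1) * b + (k + 1) * (k + 2) / 6) ^ 2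
      = (k : ℝ) * (k ^ 2 - 1) * (k ^ 2 - 4) / 180 := by
  rw [sum_Icc_quadratic_sq]
  ring

theorem covariance_increments_uniform
    {Ω : Type*} [MeasurableSpace Ω] (μ : Measure Ω) [IsProbabilityMeasure μ]
    (k : ℕ) (hk : 2 ≤ k) (x : Fin 3 → Ω → ℕ)
    (hmeas : ∀ i, Measurable (x i))
    (hdist : ∀ i, Measure.map (x i) μ = unifMeasure k)
    (hindep : iIndepFun x μ)
    (M : ℝ) (hM : M = ∫ ω, |(x 1 ω : ℝ) - (x 0 ω : ℝ)| ∂μ) :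
    ∫ ω, (|(x 1 ω : ℝ) - (x 0 ω : ℝ)| - M) * (|(x 2 ω : ℝ) - (x 1 ω : ℝ)| - M) ∂μ
      = ((k : ℝ) - 1) * ((k : ℝ) - 2) * ((k : ℝ) + 2) * ((k : ℝ) + 1)
          / (180 * (k : ℝ) ^ 2) := by
  have hk0 : (k : ℝ) ≠ 0 := by exact_mod_cast (by omega : k ≠ 0)
  have hMk : M = ((k : ℝ) ^ 2 - 1) / (3 * k) := by
    rw [hM, integral_comp_eq_sum_of_iid_unif hmeas hdist hindep (fun q => |(q.2.1 : ℝ) - q.1|),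
      sum_product_product_eq_sum_middle]
    simp only [sum_const, Nat.card_Icc, Nat.add_sub_cancel, nsmul_eq_mul, ← mul_sum,
      sum_Icc_sum_Icc_abs_sub]
    field_simp
  have hsplit : ∀ b ∈ Icc 1 k,
      ∑ a ∈ Icc 1 k, ∑ c ∈ Icc 1 k, (|(b : ℝ) - a| - M) * (|(c : ℝ) - b| - M)
        = ((b : ℝ) ^ 2 - (k + 1) * b + (k + 1) * (k + 2) / 6) ^ 2 := by
    intro b hb
    simp only [abs_sub_comm _ (b : ℝ)]
    rw [← sum_mul_sum, hMk, sum_Icc_abs_sub_sub_mean (mem_Icc.1 hb).2 hk0, ← sq]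
  rw [integral_comp_eq_sum_of_iid_unif hmeas hdist hindep
      (fun q => (|(q.2.1 : ℝ) - q.1| - M) * (|(q.2.2 : ℝ) - q.2.1| - M)),
    sum_product_product_eq_sum_middle, sum_congr rfl hsplit, sum_Icc_quadratic_centered_sq]
  field_simp
  ring
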